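/- For any tree T computing a partial Boolean function g ⊆ {0,1}^m × {0,1} and any pair of distributions μ0, μ1 with supp(μ_b) ⊆ g⁻¹(b) for b ∈ {0,1}, the sum Σ_{v∈T} Δ(v)·R(v) over all nodes v of T equals 1; consequently χ(T,(μ0,μ1)) = Σ_{v∈T} d_T(v)·Δ(v)·R(v) is at most the depth of T, and hence χ(g) ≤ D(g), the deterministic query complexity of g. -/

import Mathlib

open Finset

inductive DTree (ι : Type) (S : Type) where
  | leaf : S → DTree ι S
  | node : ι → DTree ι S → DTree ι S → DTree ι S

namespace DTree

/-- Evaluate a deterministic decision tree on an input. -/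
def eval {ι S : Type} : DTree ι S → (ι → Bool) → S
  | leaf s, _ => s
  | node i t0 t1, x => if x i then t1.eval x else t0.eval x

/-- The depth (worst-case number of queries) of a decision tree. -/
def depth {ι S : Type} : DTree ι S → ℕ
  | leaf _ => 0
  | node _ t0 t1 => max t0.depth t1.depth + 1

/-- The number of queries a decision tree makes on a given input. -/
def queries {ι S : Type} : DTree ι S → (ι → Bool) → ℕ
  | leaf _, _ => 0
  | node i t0 t1, x => (if x i then t1.queries x else t0.queries x) + 1

end DTree

/-- A probability distribution on a finite type, as a nonnegative real weight function summing to 1. -/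
def IsDist {γ : Type} [Fintype γ] (μ : γ → ℝ) : Prop :=
  (∀ x, 0 ≤ μ x) ∧ ∑ x, μ x = 1

/-- The support of `μ` is contained in `A`. -/
def SuppIn {γ : Type} [Fintype γ] (μ : γ → ℝ) (A : Set γ) : Prop :=
  ∀ x, μ x ≠ 0 → x ∈ A

/-- `g⁻¹(b)` for a partial Boolean function given as a relation. -/
def preim {m : ℕ} (g : Set ((Fin m → Bool) × Bool)) (b : Bool) : Set (Fin m → Bool) :=
  {x | (x, b) ∈ g ∧ (x, !b) ∉ g}

/-- `x` is a valid input of the partial Boolean function `g`. -/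
def ValidIn {m : ℕ} (g : Set ((Fin m → Bool) × Bool)) (x : Fin m → Bool) : Prop :=
  x ∈ preim g false ∨ x ∈ preim g true

/-- A deterministic decision tree computes the partial Boolean function `g`. -/
def Computes {m : ℕ} (T : DTree (Fin m) Bool) (g : Set ((Fin m → Bool) × Bool)) : Prop :=
  ∀ b : Bool, ∀ x ∈ preim g b, T.eval x = b

/-- The paper's convention for partial Boolean functions: for every invalid input `y`, both
`(y,0)` and `(y,1)` belong to the relation (so that any output is accepted on invalid inputs).
`totalize g` adds all such pairs; it has the same valid inputs and the same `g⁻¹(b)` as `g`. -/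
def totalize {m : ℕ} (g : Set ((Fin m → Bool) × Bool)) : Set ((Fin m → Bool) × Bool) :=
  {p | p ∈ g ∨ ¬ ValidIn g p.1}

/-- Probability that coordinate `j` equals `b` under `μ`. -/
noncomputable def prb {m : ℕ} (μ : (Fin m → Bool) → ℝ) (j : Fin m) (b : Bool) : ℝ :=
  ∑ x, if x j = b then μ x else 0

/-- `μ` conditioned on coordinate `j` being equal to `b` (zero if the event has probability zero). -/
noncomputable def condD {m : ℕ} (μ : (Fin m → Bool) → ℝ) (j : Fin m) (b : Bool) :
    (Fin m → Bool) → ℝ :=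
  fun x => if x j = b then μ x / prb μ j b else 0

/-- `chiW T μ0 μ1 = (Σ_v Δ(v)R(v), Σ_v d_T(v)Δ(v)R(v))`, where at a node `v` querying `j`,
`p_b(v)` is the probability that the queried bit is `0` under `μ_b` conditioned on reaching `v`,
`Δ(v) = |p_0(v) - p_1(v)|`, and `R(v)` is the product along the path to `v` of
`min` of the two conditional transition probabilities; the depth of the root is 1. -/
noncomputable def chiW {m : ℕ} {S : Type} :
    DTree (Fin m) S → ((Fin m → Bool) → ℝ) → ((Fin m → Bool) → ℝ) → ℝ × ℝ
  | .leaf _, _, _ => (0, 0)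
  | .node j t0 t1, μ0, μ1 =>
    let p0 := prb μ0 j false
    let p1 := prb μ1 j false
    let r0 := chiW t0 (condD μ0 j false) (condD μ1 j false)
    let r1 := chiW t1 (condD μ0 j true) (condD μ1 j true)
    (|p0 - p1| + min p0 p1 * r0.1 + min (1 - p0) (1 - p1) * r1.1,
     |p0 - p1| + min p0 p1 * r0.1 + min (1 - p0) (1 - p1) * r1.1
       + min p0 p1 * r0.2 + min (1 - p0) (1 - p1) * r1.2)

/-- The conflict complexity `χ(T,(μ0,μ1)) = Σ_v d_T(v)·Δ(v)·R(v)` of a tree with respect to a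
pair of distributions. -/
noncomputable def chi {m : ℕ} {S : Type} (T : DTree (Fin m) S)
    (μ0 μ1 : (Fin m → Bool) → ℝ) : ℝ :=
  (chiW T μ0 μ1).2

/-- `(T,(μ0,μ1))` is full: `Σ_v Δ(v)·R(v) = 1`. -/
def FullPair {m : ℕ} {S : Type} (T : DTree (Fin m) S)
    (μ0 μ1 : (Fin m → Bool) → ℝ) : Prop :=
  (chiW T μ0 μ1).1 = 1

/-- The conflict complexity `χ(g) = max_{(μ0,μ1)} min_T χ(T,(μ0,μ1))`, where the maximum is over
pairs of distributions supported on `g⁻¹(0)` and `g⁻¹(1)` and the minimum over deterministic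
trees computing `g`. -/
noncomputable def conflict {m : ℕ} (g : Set ((Fin m → Bool) × Bool)) : ℝ :=
  sSup { c : ℝ | ∃ μ0 μ1 : (Fin m → Bool) → ℝ,
    IsDist μ0 ∧ IsDist μ1 ∧ SuppIn μ0 (preim g false) ∧ SuppIn μ1 (preim g true) ∧
    c = sInf { x : ℝ | ∃ T : DTree (Fin m) Bool, Computes T g ∧ x = chi T μ0 μ1 } }

/-- Deterministic query complexity of a partial Boolean function. -/
noncomputable def Dcomp {m : ℕ} (g : Set ((Fin m → Bool) × Bool)) : ℕ :=
  sInf { d : ℕ | ∃ T : DTree (Fin m) Bool, Computes T g ∧ T.depth ≤ d }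

section Aux

/-- Sub-probability distribution. -/
def SubDist {γ : Type} [Fintype γ] (μ : γ → ℝ) : Prop :=
  (∀ x, 0 ≤ μ x) ∧ ∑ x, μ x ≤ 1

lemma IsDist.toSubDist {γ : Type} [Fintype γ] {μ : γ → ℝ} (h : IsDist μ) : SubDist μ :=
  ⟨h.1, le_of_eq h.2⟩

lemma prb_nonneg {m : ℕ} {μ : (Fin m → Bool) → ℝ} (h : ∀ x, 0 ≤ μ x) (j : Fin m) (b : Bool) :
    0 ≤ prb μ j b := by
  apply Finset.sum_nonneg
  intro x _
  split
  · exact h x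
  · exact le_refl 0

lemma prb_add {m : ℕ} (μ : (Fin m → Bool) → ℝ) (j : Fin m) :
    prb μ j false + prb μ j true = ∑ x, μ x := by
  rw [prb, prb, ← Finset.sum_add_distrib]
  apply Finset.sum_congr rfl
  intro x _
  cases h : x j <;> simp [h]

lemma prb_le_one {m : ℕ} {μ : (Fin m → Bool) → ℝ} (h : SubDist μ) (j : Fin m) (b : Bool) :
    prb μ j b ≤ 1 := by
  have h1 := prb_add μ j
  have h2 := prb_nonneg h.1 j false
  have h3 := prb_nonneg h.1 j true
  have h4 := h.2
  cases b <;> linarith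

lemma prb_true_eq {m : ℕ} {μ : (Fin m → Bool) → ℝ} (h : IsDist μ) (j : Fin m) :
    prb μ j true = 1 - prb μ j false := by
  have h1 := prb_add μ j
  rw [h.2] at h1
  linarith

lemma condD_nonneg {m : ℕ} {μ : (Fin m → Bool) → ℝ} (h : ∀ x, 0 ≤ μ x) (j : Fin m) (b : Bool)
    (x : Fin m → Bool) : 0 ≤ condD μ j b x := by
  unfold condD
  split
  · exact div_nonneg (h x) (prb_nonneg h j b)
  · exact le_refl 0

lemma condD_sum {m : ℕ} {μ : (Fin m → Bool) → ℝ} (j : Fin m) (b : Bool)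
    (hp : prb μ j b ≠ 0) : ∑ x, condD μ j b x = 1 := by
  have : ∀ x : Fin m → Bool, condD μ j b x = (if x j = b then μ x else 0) / prb μ j b := by
    intro x
    unfold condD
    split <;> simp
  simp_rw [this]
  rw [← Finset.sum_div]
  exact div_self hp

lemma condD_isDist {m : ℕ} {μ : (Fin m → Bool) → ℝ} (h : IsDist μ) (j : Fin m) (b : Bool)
    (hp : prb μ j b ≠ 0) : IsDist (condD μ j b) :=
  ⟨condD_nonneg h.1 j b, condD_sum j b hp⟩

lemma condD_subDist {m : ℕ} {μ : (Fin m → Bool) → ℝ} (h : SubDist μ) (j : Fin m) (b : Bool) :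
    SubDist (condD μ j b) := by
  refine ⟨condD_nonneg h.1 j b, ?_⟩
  by_cases hp : prb μ j b = 0
  · have : ∀ x : Fin m → Bool, condD μ j b x = 0 := by
      intro x
      unfold condD
      rw [hp]
      split <;> simp
    simp [this]
  · rw [condD_sum j b hp]

lemma condD_supp {m : ℕ} {μ : (Fin m → Bool) → ℝ} {j : Fin m} {b : Bool} {x : Fin m → Bool}
    (h : condD μ j b x ≠ 0) : μ x ≠ 0 ∧ x j = b := by
  unfold condD at h
  by_cases hb : x j = b
  · rw [if_pos hb] at h
    refine ⟨fun e => h ?_, hb⟩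
    rw [e, zero_div]
  · rw [if_neg hb] at h
    exact absurd rfl h

lemma chiW_nonneg {m : ℕ} {S : Type} (T : DTree (Fin m) S) :
    ∀ μ0 μ1 : (Fin m → Bool) → ℝ, SubDist μ0 → SubDist μ1 →
      0 ≤ (chiW T μ0 μ1).1 ∧ 0 ≤ (chiW T μ0 μ1).2 := by
  induction T with
  | leaf s => intro μ0 μ1 _ _; simp [chiW]
  | node j t0 t1 ih0 ih1 =>
    intro μ0 μ1 h0 h1
    have r0 := ih0 _ _ (condD_subDist h0 j false) (condD_subDist h1 j false)
    have r1 := ih1 _ _ (condD_subDist h0 j true) (condD_subDist h1 j true)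
    have m0 : 0 ≤ min (prb μ0 j false) (prb μ1 j false) :=
      le_min (prb_nonneg h0.1 j false) (prb_nonneg h1.1 j false)
    have m1 : 0 ≤ min (1 - prb μ0 j false) (1 - prb μ1 j false) :=
      le_min (by linarith [prb_le_one h0 j false]) (by linarith [prb_le_one h1 j false])
    have ha := abs_nonneg (prb μ0 j false - prb μ1 j false)
    simp only [chiW]
    constructor
    · have := mul_nonneg m0 r0.1
      have := mul_nonneg m1 r1.1
      positivity
    · have := mul_nonneg m0 r0.1
      have := mul_nonneg m1 r1.1
      have := mul_nonneg m0 r0.2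
      have := mul_nonneg m1 r1.2
      positivity

lemma exists_ne_zero {γ : Type} [Fintype γ] {μ : γ → ℝ} (h : IsDist μ) : ∃ x, μ x ≠ 0 := by
  by_contra hc
  push_neg at hc
  have : ∑ x, μ x = 0 := Finset.sum_eq_zero fun x _ => hc x
  rw [h.2] at this
  norm_num at this

lemma arith_one (p0 p1 s0 s1 : ℝ) (h00 : 0 ≤ p0) (h01 : p0 ≤ 1) (h10 : 0 ≤ p1) (h11 : p1 ≤ 1)
    (h0 : min p0 p1 = 0 ∨ s0 = 1) (h1 : min (1 - p0) (1 - p1) = 0 ∨ s1 = 1) :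
    |p0 - p1| + min p0 p1 * s0 + min (1 - p0) (1 - p1) * s1 = 1 := by
  have e0 : min p0 p1 * s0 = min p0 p1 := by
    rcases h0 with h0 | h0
    · rw [h0, zero_mul]
    · rw [h0, mul_one]
  have e1 : min (1 - p0) (1 - p1) * s1 = min (1 - p0) (1 - p1) := by
    rcases h1 with h1 | h1
    · rw [h1, zero_mul]
    · rw [h1, mul_one]
  rw [e0, e1]
  rcases le_total p0 p1 with h | h
  · rw [abs_of_nonpos (by linarith), min_eq_left h, min_eq_right (by linarith)]
    ring
  · rw [abs_of_nonneg (by linarith), min_eq_right h, min_eq_left (by linarith)]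
    ring

/-- The key induction: for a tree separating the supports of two distributions,
`Σ Δ·R = 1` and `Σ d·Δ·R ≤ depth`. -/
lemma chiW_main {m : ℕ} (T : DTree (Fin m) Bool) :
    ∀ μ0 μ1 : (Fin m → Bool) → ℝ, IsDist μ0 → IsDist μ1 →
      (∀ x, μ0 x ≠ 0 → T.eval x = false) → (∀ x, μ1 x ≠ 0 → T.eval x = true) →
      (chiW T μ0 μ1).1 = 1 ∧ (chiW T μ0 μ1).2 ≤ (T.depth : ℝ) := by
  induction T with
  | leaf s =>
    intro μ0 μ1 h0 h1 he0 he1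
    obtain ⟨x0, hx0⟩ := exists_ne_zero h0
    obtain ⟨x1, hx1⟩ := exists_ne_zero h1
    have e0 := he0 x0 hx0
    have e1 := he1 x1 hx1
    simp [DTree.eval] at e0 e1
    rw [e0] at e1
    exact absurd e1 (by simp)
  | node j t0 t1 ih0 ih1 =>
    intro μ0 μ1 h0 h1 he0 he1
    set p0 := prb μ0 j false with hp0def
    set p1 := prb μ1 j false with hp1def
    have hb00 : 0 ≤ p0 := prb_nonneg h0.1 j false
    have hb01 : p0 ≤ 1 := prb_le_one h0.toSubDist j false
    have hb10 : 0 ≤ p1 := prb_nonneg h1.1 j false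
    have hb11 : p1 ≤ 1 := prb_le_one h1.toSubDist j false
    -- the false branch
    have key0 : min p0 p1 = 0 ∨
        ((chiW t0 (condD μ0 j false) (condD μ1 j false)).1 = 1 ∧
         (chiW t0 (condD μ0 j false) (condD μ1 j false)).2 ≤ (t0.depth : ℝ)) := by
      by_cases hm : min p0 p1 = 0
      · exact Or.inl hm
      right
      have hq0 : p0 ≠ 0 := by
        intro e
        exact hm (le_antisymm (by rw [← e]; exact min_le_left _ _) (le_min (le_of_eq e.symm) hb10))
      have hq1 : p1 ≠ 0 := by
        intro e
        exact hm (le_antisymm (by rw [← e]; exact min_le_right _ _) (le_min hb00 (le_of_eq e.symm)))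
      apply ih0 _ _ (condD_isDist h0 j false hq0) (condD_isDist h1 j false hq1)
      · intro x hx
        obtain ⟨hmu, hxj⟩ := condD_supp hx
        have := he0 x hmu
        simpa [DTree.eval, hxj] using this
      · intro x hx
        obtain ⟨hmu, hxj⟩ := condD_supp hx
        have := he1 x hmu
        simpa [DTree.eval, hxj] using this
    -- the true branch
    have key1 : min (1 - p0) (1 - p1) = 0 ∨
        ((chiW t1 (condD μ0 j true) (condD μ1 j true)).1 = 1 ∧
         (chiW t1 (condD μ0 j true) (condD μ1 j true)).2 ≤ (t1.depth : ℝ)) := by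
      by_cases hm : min (1 - p0) (1 - p1) = 0
      · exact Or.inl hm
      right
      have hq0 : prb μ0 j true ≠ 0 := by
        rw [prb_true_eq h0 j, ← hp0def]
        intro e
        exact hm (le_antisymm (by rw [← e]; exact min_le_left _ _)
          (le_min (le_of_eq e.symm) (by linarith)))
      have hq1 : prb μ1 j true ≠ 0 := by
        rw [prb_true_eq h1 j, ← hp1def]
        intro e
        exact hm (le_antisymm (by rw [← e]; exact min_le_right _ _)
          (le_min (by linarith) (le_of_eq e.symm)))
      apply ih1 _ _ (condD_isDist h0 j true hq0) (condD_isDist h1 j true hq1)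
      · intro x hx
        obtain ⟨hmu, hxj⟩ := condD_supp hx
        have := he0 x hmu
        simpa [DTree.eval, hxj] using this
      · intro x hx
        obtain ⟨hmu, hxj⟩ := condD_supp hx
        have := he1 x hmu
        simpa [DTree.eval, hxj] using this
    have hone : (chiW (DTree.node j t0 t1) μ0 μ1).1 = 1 := by
      simp only [chiW]
      exact arith_one p0 p1 _ _ hb00 hb01 hb10 hb11 (key0.imp id And.left) (key1.imp id And.left)
    refine ⟨hone, ?_⟩
    have hD : (DTree.depth (DTree.node j t0 t1) : ℝ) = (max t0.depth t1.depth : ℕ) + 1 := by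
      simp [DTree.depth]
    set D : ℝ := ((max t0.depth t1.depth : ℕ) : ℝ) with hDdef
    have hDnn : 0 ≤ D := Nat.cast_nonneg _
    have hd0 : (t0.depth : ℝ) ≤ D := by
      rw [hDdef]; exact_mod_cast le_max_left t0.depth t1.depth
    have hd1 : (t1.depth : ℝ) ≤ D := by
      rw [hDdef]; exact_mod_cast le_max_right t0.depth t1.depth
    have m0nn : 0 ≤ min p0 p1 := le_min hb00 hb10
    have m1nn : 0 ≤ min (1 - p0) (1 - p1) := le_min (by linarith) (by linarith)
    have hw0 : min p0 p1 * (chiW t0 (condD μ0 j false) (condD μ1 j false)).2 ≤ min p0 p1 * D := by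
      rcases key0 with h | h
      · rw [h, zero_mul, zero_mul]
      · exact mul_le_mul_of_nonneg_left (h.2.trans hd0) m0nn
    have hw1 : min (1 - p0) (1 - p1) * (chiW t1 (condD μ0 j true) (condD μ1 j true)).2 ≤
        min (1 - p0) (1 - p1) * D := by
      rcases key1 with h | h
      · rw [h, zero_mul, zero_mul]
      · exact mul_le_mul_of_nonneg_left (h.2.trans hd1) m1nn
    have hsum : min p0 p1 + min (1 - p0) (1 - p1) ≤ 1 := by
      have := min_le_left p0 p1
      have := min_le_left (1 - p0) (1 - p1)
      linarith
    have h2 : (chiW (DTree.node j t0 t1) μ0 μ1).2 =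
        (chiW (DTree.node j t0 t1) μ0 μ1).1
          + min p0 p1 * (chiW t0 (condD μ0 j false) (condD μ1 j false)).2
          + min (1 - p0) (1 - p1) * (chiW t1 (condD μ0 j true) (condD μ1 j true)).2 := by
      simp only [chiW]
      rfl
    rw [h2, hone, hD]
    have : min p0 p1 * D + min (1 - p0) (1 - p1) * D ≤ D := by
      nlinarith
    linarith

/-- Build a complete tree querying the indices in `l`, with current partial assignment `x`. -/
def fullT {m : ℕ} (f : (Fin m → Bool) → Bool) :
    List (Fin m) → (Fin m → Bool) → DTree (Fin m) Bool
  | [], x => .leaf (f x)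
  | i :: l, x => .node i (fullT f l (Function.update x i false))
      (fullT f l (Function.update x i true))

lemma fullT_eval {m : ℕ} (f : (Fin m → Bool) → Bool) (l : List (Fin m)) (x y : Fin m → Bool) :
    (fullT f l x).eval y = f (fun j => if j ∈ l then y j else x j) := by
  induction l generalizing x with
  | nil => simp [fullT, DTree.eval]
  | cons i l ih =>
    have hupd : ∀ b : Bool, y i = b →
        (fun j => if j ∈ l then y j else Function.update x i b j) =
        (fun j => if j ∈ i :: l then y j else x j) := by
      intro b hb
      funext j
      by_cases hl : j ∈ l
      · simp [hl, List.mem_cons]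
      · by_cases hi : j = i
        · subst hi
          simp [hl, hb, List.mem_cons]
        · simp [hl, hi, Function.update_of_ne hi, List.mem_cons]
    cases hb : y i
    · simp only [fullT, DTree.eval, hb, if_neg Bool.false_ne_true]
      rw [ih, hupd false hb]
    · simp only [fullT, DTree.eval, hb, if_pos rfl]
      rw [ih, hupd true hb]
      simp

open Classical in
lemma exists_computes {m : ℕ} (g : Set ((Fin m → Bool) × Bool)) :
    ∃ T : DTree (Fin m) Bool, Computes T g := by
  refine ⟨fullT (fun x => if x ∈ preim g true then true else false) (List.finRange m)
    (fun _ => false), ?_⟩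
  intro b x hx
  rw [fullT_eval]
  have : (fun j : Fin m => if j ∈ List.finRange m then x j else false) = x := by
    funext j
    simp [List.mem_finRange]
  rw [this]
  cases b
  · rw [if_neg]
    intro hc
    exact hx.2 hc.1
  · rw [if_pos hx]

end Aux

/-- For any tree `T` computing `g` and any pair of distributions `(μ0,μ1)`
supported on `g⁻¹(0)` and `g⁻¹(1)`, `Σ_v Δ(v)R(v) = 1`; consequently
`χ(T,(μ0,μ1)) = Σ_v d_T(v)Δ(v)R(v)` is at most the depth of `T`, and hence `χ(g) ≤ D(g)`. -/
theorem sum_delta_R_eq_one_and_chi_le_depth (m : ℕ) (g : Set ((Fin m → Bool) × Bool)) :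
    (∀ (μ0 μ1 : (Fin m → Bool) → ℝ) (T : DTree (Fin m) Bool),
      IsDist μ0 → IsDist μ1 → SuppIn μ0 (preim g false) → SuppIn μ1 (preim g true) →
      Computes T g →
      (chiW T μ0 μ1).1 = 1 ∧ chi T μ0 μ1 ≤ (T.depth : ℝ)) ∧
    conflict g ≤ (Dcomp g : ℝ) := by
  have main : ∀ (μ0 μ1 : (Fin m → Bool) → ℝ) (T : DTree (Fin m) Bool),
      IsDist μ0 → IsDist μ1 → SuppIn μ0 (preim g false) → SuppIn μ1 (preim g true) →
      Computes T g → (chiW T μ0 μ1).1 = 1 ∧ chi T μ0 μ1 ≤ (T.depth : ℝ) := by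
    intro μ0 μ1 T h0 h1 s0 s1 hc
    exact chiW_main T μ0 μ1 h0 h1 (fun x hx => hc false x (s0 x hx))
      (fun x hx => hc true x (s1 x hx))
  refine ⟨main, ?_⟩
  obtain ⟨T, hT⟩ := exists_computes g
  have hne : {d : ℕ | ∃ T : DTree (Fin m) Bool, Computes T g ∧ T.depth ≤ d}.Nonempty :=
    ⟨T.depth, T, hT, le_rfl⟩
  obtain ⟨T0, hT0, hd0⟩ := Nat.sInf_mem hne
  rw [conflict]
  apply Real.sSup_le
  · rintro c ⟨μ0, μ1, h0, h1, s0, s1, rfl⟩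
    apply csInf_le_of_le
    · refine ⟨0, ?_⟩
      rintro x ⟨T', hT', rfl⟩
      exact (chiW_nonneg T' μ0 μ1 h0.toSubDist h1.toSubDist).2
    · exact ⟨T0, hT0, rfl⟩
    · exact le_trans (main μ0 μ1 T0 h0 h1 s0 s1 hT0).2 (Nat.cast_le.mpr hd0)
  · exact Nat.cast_nonneg _
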